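/- Let X be a proper geodesic CAT(−1) space. (1) For every R > 1 and x, y, z, w ∈ X, if w ∈ O_R(x,y) ∩ O_R(y,z), then the sequence (x, [y,z], w) is 6R-aligned. (2) For every R > 1 and x, y, z, w ∈ X, if (x, [y,z], w) is R-aligned and d(y,z) > 3R, then w ∈ O_{3R}(x,y) ∩ O_{3R}(y,z). -/

import Mathlib

/-!
Core definitions: proper geodesic CAT(−1) spaces, geodesic segments,
nearest-point projections, horofunction (= Gromov) boundary.
-/

noncomputable section

open Real Set Metric Filter Topology
open scoped ENNReal NNReal

/-- Inverse hyperbolic cosine. -/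
def arcosh (x : ℝ) : ℝ := Real.log (x + Real.sqrt (x ^ 2 - 1))

/-- Cosine of the angle, at the common vertex, of the ℍ²-comparison triangle whose two
sides adjacent to this vertex have lengths `a`, `b` and whose opposite side has length `c`
(hyperbolic law of cosines). -/
def cmpCos (a b c : ℝ) : ℝ :=
  (Real.cosh a * Real.cosh b - Real.cosh c) / (Real.sinh a * Real.sinh b)

/-- The distance, in the ℍ²-comparison triangle with side lengths `a`, `b` adjacent to the
common vertex and opposite side length `c`, between the comparison points at arclength
parameters `s` (on the side of length `a`) and `t` (on the side of length `b`). -/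
def cmpDist (a b c s t : ℝ) : ℝ :=
  _root_.arcosh (Real.cosh s * Real.cosh t - Real.sinh s * Real.sinh t * cmpCos a b c)

/-- A choice of geodesics in a metric space: `geo x y` is an arclength parametrization on
`[0, dist x y]` of a geodesic from `x` to `y`.  A metric space admitting such a structure
is a geodesic space. -/
structure GeodesicStructure (X : Type*) [MetricSpace X] where
  geo : X → X → ℝ → X
  geo_zero : ∀ x y, geo x y 0 = x
  geo_end : ∀ x y, geo x y (dist x y) = y
  geo_isom : ∀ x y, ∀ s ∈ Set.Icc (0 : ℝ) (dist x y), ∀ t ∈ Set.Icc (0 : ℝ) (dist x y),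
    dist (geo x y s) (geo x y t) = |s - t|

/-- The geodesic segment `[x, y]`. -/
def GeodesicStructure.seg {X : Type*} [MetricSpace X] (G : GeodesicStructure X) (x y : X) :
    Set X :=
  G.geo x y '' Set.Icc 0 (dist x y)

/-- The CAT(−1) comparison property: every geodesic triangle is at least as thin as its
comparison triangle in the hyperbolic plane ℍ². -/
def GeodesicStructure.IsCATNegOne {X : Type*} [MetricSpace X] (G : GeodesicStructure X) :
    Prop :=
  ∀ x y z : X, ∀ s ∈ Set.Icc (0 : ℝ) (dist x y), ∀ t ∈ Set.Icc (0 : ℝ) (dist x z),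
    dist (G.geo x y s) (G.geo x z t) ≤ cmpDist (dist x y) (dist x z) (dist y z) s t

/-- `p` is a nearest point to `x` in the set `s` (a nearest-point projection of `x`). -/
def IsNearestPt {X : Type*} [MetricSpace X] (s : Set X) (x p : X) : Prop :=
  p ∈ s ∧ ∀ q ∈ s, dist x p ≤ dist x q

/-- A (possibly noncompact) geodesic subset of `X`: the isometric image of an interval. -/
def IsGeodesicSet {X : Type*} [MetricSpace X] (γ : Set X) : Prop :=
  ∃ (I : Set ℝ) (f : ℝ → X), I.OrdConnected ∧
    (∀ s ∈ I, ∀ t ∈ I, dist (f s) (f t) = |s - t|) ∧ γ = f '' I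

/-- A bi-infinite geodesic parametrized by arclength. -/
def IsGeodesicLine {X : Type*} [MetricSpace X] (γ : ℝ → X) : Prop :=
  ∀ s t : ℝ, dist (γ s) (γ t) = |s - t|

/-- The set of nearest-point projections to `γ` of points of `S`. -/
def projSet {X : Type*} [MetricSpace X] (γ : Set X) (S : Set X) : Set X :=
  {p | ∃ w ∈ S, IsNearestPt γ w p}

/-- The horofunction embedding `z ↦ d(·, z) − d(x₀, z)` based at `x₀`. -/
def horoemb {X : Type*} [MetricSpace X] (x0 : X) (z : X) : X → ℝ :=
  fun x => dist x z - dist x0 z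

/-- The horofunction boundary of `X` (based at `x₀`), which for a proper geodesic
CAT(−1) space coincides with the Gromov boundary `∂X`:  the set of limits, in the
topology of pointwise convergence, of functions `d(·, zₙ) − d(x₀, zₙ)` with `zₙ → ∞`. -/
def horoBdry {X : Type*} [MetricSpace X] (x0 : X) : Set (X → ℝ) :=
  closure (Set.range (horoemb x0)) \ Set.range (horoemb x0)

/-- `(w, [x,y])` is `K`-aligned: the nearest-point projection of `w` to `[x,y]` is at
distance less than `K` from `x`. -/
def AlignedLeft {X : Type*} [MetricSpace X] (G : GeodesicStructure X) (w x y : X)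
    (K : ℝ) : Prop :=
  ∃ p, IsNearestPt (G.seg x y) w p ∧ dist p x < K

/-- `([x,y], z)` is `K`-aligned, i.e. `(z, [y,x])` is `K`-aligned. -/
def AlignedRight {X : Type*} [MetricSpace X] (G : GeodesicStructure X) (x y z : X)
    (K : ℝ) : Prop :=
  ∃ q, IsNearestPt (G.seg x y) z q ∧ dist q y < K

/-- `(w, [x,y], z)` is `K`-aligned. -/
def AlignedTriple {X : Type*} [MetricSpace X] (G : GeodesicStructure X) (w x y z : X)
    (K : ℝ) : Prop :=
  AlignedLeft G w x y K ∧ AlignedRight G x y z K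

/-!
Write `(y|z)_x` for `gromovProduct x y z`. Comparison with ℍ² inside a single triangle gives
three estimates: the hyperbolic Stewart inequality for `cosh` of the distance from a point to
the points of a geodesic, the bound `d(x, c) ≤ (y|z)_x + log 2` for the point `c` of `[y,z]` at
distance `(x|z)_y` from `y`, and exponential thinness of triangles, which yields Gromov's
four-point condition with constant `1`. Stewart's inequality also gives uniqueness of geodesics
and, at a nearest point `p` of a convex set, `cosh d(x,p) cosh d(p,r) ≤ cosh d(x,r)`.
Consequently the nearest point of `x` on `[y,z]` lies within `log 2` of the point at distance
`(x|z)_y` from `y`, and `d(y, [x,w])` is within `log 2` of `(x|w)_y`; with the four-point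
condition this proves (1).

For (2) the four-point condition is too weak when `R` is close to `1`. Instead one uses the
quadrilateral inequality
`cosh d(x,w) ≥ cosh d(x,p) cosh d(w,q) cosh d(p,q) - sinh d(x,p) sinh d(w,q)` for the feet
`p, q` of `x, w` on `[y,z]`, which makes `(x|w)_y` exceed `d(y,p)` by less than `2R`. Its
proof is a first-variation argument at `p`: the comparison angles at `p` between `x, w` and
between `w, q` add up to at least `π/2`, because `[p,x]` leaves `[y,z]` orthogonally.
-/

namespace Real

theorem cosh_le_of_le_arcosh {d E : ℝ} (hd : 0 ≤ d) (hE : 1 ≤ E) (h : d ≤ Real.arcosh E) :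
    cosh d ≤ E := by
  simpa [cosh_arcosh hE] using (cosh_strictMonoOn.le_iff_le hd (arcosh_nonneg hE)).2 h

theorem one_add_sq_div_two_le_cosh (x : ℝ) : 1 + x ^ 2 / 2 ≤ cosh x := by
  have h : |x / 2| ≤ |sinh (x / 2)| := abs_sinh (x / 2) ▸ self_le_sinh_iff.2 (abs_nonneg _)
  have hc : cosh x = 1 + 2 * sinh (x / 2) ^ 2 := by
    rw [show x = 2 * (x / 2) by ring, cosh_two_mul, cosh_sq]
    ring_nf
  rw [hc]
  nlinarith [sq_le_sq.2 h]

theorem cosh_sub_one_le (x : ℝ) : cosh x - 1 ≤ x ^ 2 / 2 * exp (x ^ 2 / 2) := by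
  have h1 := add_one_le_exp (-(x ^ 2 / 2))
  have h2 : exp (-(x ^ 2 / 2)) * exp (x ^ 2 / 2) = 1 := by rw [← exp_add]; simp
  nlinarith [cosh_le_exp_half_sq x, exp_pos (x ^ 2 / 2)]

theorem cosh_add_mul_sinh_le_cosh_add (a h : ℝ) : cosh a + h * sinh a ≤ cosh (a + h) := by
  rw [cosh_eq, cosh_eq, sinh_eq, neg_add, exp_add, exp_add]
  nlinarith [add_one_le_exp h, add_one_le_exp (-h), exp_pos a, exp_pos (-a)]

theorem two_mul_sinh_mul_sinh_le_sinh_add {u v : ℝ} (hu : 0 ≤ u) (hv : 0 ≤ v) :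
    2 * sinh u * sinh v ≤ sinh (u + v) := by
  rw [sinh_add]
  nlinarith [sinh_nonneg_iff.2 hu, sinh_nonneg_iff.2 hv, sinh_lt_cosh u, sinh_lt_cosh v]

theorem cosh_add_mul_sinh_add_cosh_add_mul_sinh_le {k u v : ℝ} (hk : 0 ≤ k) (hu : 0 ≤ u)
    (hv : 0 ≤ v) : cosh (k + u) * sinh v + cosh (k + v) * sinh u ≤ exp k * sinh (u + v) := by
  have h := two_mul_sinh_mul_sinh_le_sinh_add hu hv
  rw [sinh_add] at h ⊢
  rw [cosh_add, cosh_add, ← cosh_add_sinh k]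
  nlinarith [mul_le_mul_of_nonneg_left h (sinh_nonneg_iff.2 hk)]

theorem exp_le_cosh_add_log_two (x : ℝ) : exp x ≤ cosh (x + log 2) := by
  rw [cosh_eq, exp_add, exp_log two_pos]
  linarith [exp_pos (-(x + log 2))]

theorem sinh_le_sinh_mul_exp_sub {t b : ℝ} (htb : t ≤ b) :
    sinh t ≤ sinh b * exp (t - b) := by
  have e1 : exp b * exp (t - b) = exp t := by rw [← exp_add]; ring_nf
  have e2 : exp (-b) * exp (t - b) = exp (t - 2 * b) := by rw [← exp_add]; ring_nf
  have := exp_le_exp.2 (show t - 2 * b ≤ -t by linarith)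
  rw [sinh_eq, sinh_eq]
  nlinarith

theorem eight_mul_exp_le_exp_mul_cosh_sub_one {R Δ : ℝ} (hR : 1 < R) (hRΔ : R ≤ Δ) :
    8 * exp Δ ≤ exp (4 * R) * (cosh Δ - 1) := by
  have hX : 2.7182818283 < exp R := exp_one_gt_d9.trans (exp_lt_exp.2 hR)
  have hXY : exp R ≤ exp Δ := exp_le_exp.2 hRΔ
  have hX4 : 0 ≤ exp R ^ 2 - exp R - 4 := by nlinarith
  have h4 : 4 * exp Δ ≤ exp R ^ 2 * (exp Δ - 1) := by
    nlinarith [mul_nonneg (sub_nonneg.2 hXY) (by nlinarith : (0 : ℝ) ≤ exp R ^ 2 - 4),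
      mul_nonneg (exp_pos R).le hX4]
  have hsq := pow_le_pow_left₀ (by positivity) h4 2
  have hY : exp Δ * exp (-Δ) = 1 := by rw [← exp_add]; simp
  have e : exp R ^ 4 * ((exp Δ + exp (-Δ)) / 2 - 1) * exp Δ
      = (exp R ^ 2 * (exp Δ - 1)) ^ 2 / 2 := by linear_combination (exp R ^ 4 / 2) * hY
  rw [show 4 * R = R + R + R + R by ring, exp_add, exp_add, exp_add, cosh_eq]
  refine le_of_mul_le_mul_right ?_ (exp_pos Δ)
  nlinarith [e]

theorem exp_add_mul_cosh_sub_one_lt {a b Δ d : ℝ} (hd : 0 ≤ d)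
    (h : cosh a * cosh b * cosh Δ - sinh a * sinh b ≤ cosh d) :
    exp (a + b) * (cosh Δ - 1) < 2 * exp d := by
  have hab : exp a * exp b ≤ 4 * (cosh a * cosh b) := by
    rw [cosh_eq, cosh_eq]; nlinarith [exp_pos a, exp_pos b, exp_pos (-a), exp_pos (-b)]
  have hd' : 2 * cosh d - 1 ≤ exp d := by
    rw [cosh_eq]; linarith [exp_le_one_iff.2 (neg_nonpos.2 hd)]
  have hsplit : cosh a * cosh b * cosh Δ - sinh a * sinh b
      = cosh a * cosh b * (cosh Δ - 1) + cosh (a - b) := by rw [cosh_sub]; ring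
  rw [exp_add]
  nlinarith [one_le_cosh (a - b), one_le_cosh Δ, mul_le_mul_of_nonneg_right hab
    (sub_nonneg.2 (one_le_cosh Δ))]

theorem add_add_sub_lt_of_cosh_le {R a b Δ d : ℝ} (hR : 1 < R) (hRΔ : R ≤ Δ) (hd : 0 ≤ d)
    (h : cosh a * cosh b * cosh Δ - sinh a * sinh b ≤ cosh d) :
    a + b + Δ - d < 4 * R - 2 * log 2 := by
  have h1 := exp_add_mul_cosh_sub_one_lt hd h
  have h2 := eight_mul_exp_le_exp_mul_cosh_sub_one hR hRΔ
  have e4 : exp (4 * R - 2 * log 2) = exp (4 * R) / 4 := by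
    rw [exp_sub, show 2 * log 2 = log 2 + log 2 by ring, exp_add, exp_log two_pos]; norm_num
  rw [← exp_lt_exp, e4, exp_sub, exp_add, div_lt_div_iff₀ (exp_pos _) (by norm_num)]
  nlinarith [exp_pos (a + b), exp_pos (4 * R)]

end Real

-- Comes from `κ σ² ≤ sinh σ * sinh (κ σ)`, `cosh v - 1 ≤ v² / 2 * exp (v² / 2)` and
-- `1 + d² / 2 ≤ cosh d`; its value at `σ = 0` is `(1 + κ² - (κ C)²) / 2`.
def firstVariationBound (Δ C κ σ : ℝ) : ℝ :=
  (exp (σ ^ 2 / 2) * cosh (κ * σ) + κ ^ 2 * exp ((κ * σ) ^ 2 / 2)) / 2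
    - max (κ * C - cosh Δ / sinh Δ * κ ^ 2 / 2 * σ * exp ((κ * σ) ^ 2 / 2)) 0 ^ 2 / 2

theorem mul_le_firstVariationBound {Δ C Cs κ σ d : ℝ} (hΔ : 0 < Δ) (hC : 0 ≤ C)
    (hCs : 0 < Cs) (hκ : 0 < κ) (hσ : 0 < σ)
    (hup : cosh d ≤ cosh σ * cosh (κ * σ) - sinh σ * sinh (κ * σ) * Cs)
    (hlow : sinh Δ * C * sinh (κ * σ) - cosh Δ * (cosh (κ * σ) - 1) ≤ sinh Δ * d) :
    Cs * κ ≤ firstVariationBound Δ C κ σ := by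
  have hsΔ : 0 < sinh Δ := sinh_pos_iff.2 hΔ
  have hs : 0 < κ * σ := mul_pos hκ hσ
  set E := exp ((κ * σ) ^ 2 / 2)
  set w := κ * C - cosh Δ / sinh Δ * κ ^ 2 / 2 * σ * E with hw
  have hd : σ * w ≤ d := by
    have h4 : sinh Δ * (σ * w) = sinh Δ * C * (κ * σ) - cosh Δ * ((κ * σ) ^ 2 / 2 * E) := by
      rw [hw]; field_simp
    refine le_of_mul_le_mul_left ?_ hsΔ
    rw [h4]
    nlinarith [mul_le_mul_of_nonneg_left (self_le_sinh_iff.2 hs.le) (mul_nonneg hsΔ.le hC),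
      mul_le_mul_of_nonneg_left (cosh_sub_one_le (κ * σ)) (cosh_pos Δ).le]
  have hcd : 1 + (σ * max w 0) ^ 2 / 2 ≤ cosh d := by
    refine le_trans ?_ (one_add_sq_div_two_le_cosh d)
    have : (σ * max w 0) ^ 2 ≤ d ^ 2 := by
      rcases le_total w 0 with hw0 | hw0
      · rw [max_eq_right hw0, mul_zero]; nlinarith [sq_nonneg d]
      · rw [max_eq_left hw0]; exact pow_le_pow_left₀ (mul_nonneg hσ.le hw0) hd 2
    linarith
  have hsinh : κ * σ ^ 2 ≤ sinh σ * sinh (κ * σ) := by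
    nlinarith [mul_le_mul (self_le_sinh_iff.2 hσ.le) (self_le_sinh_iff.2 hs.le) hs.le
      (sinh_nonneg_iff.2 hσ.le)]
  have hcosh : cosh σ * cosh (κ * σ) - 1
      ≤ σ ^ 2 * (exp (σ ^ 2 / 2) * cosh (κ * σ) + κ ^ 2 * E) / 2 := by
    nlinarith [mul_le_mul_of_nonneg_right (cosh_sub_one_le σ) (cosh_pos (κ * σ)).le,
      cosh_sub_one_le (κ * σ)]
  have key : Cs * κ * σ ^ 2 ≤ firstVariationBound Δ C κ σ * σ ^ 2 := by
    simp only [firstVariationBound]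
    nlinarith [mul_le_mul_of_nonneg_left hsinh hCs.le]
  exact le_of_mul_le_mul_right key (by positivity)

/-- First variation at the common vertex of two geodesics: `d σ` stands for the distance between
the points at distances `σ` and `κ σ` from the vertex, `Cs` is the comparison cosine of their
angle, and `hlow` bounds `d σ` from below to first order through a second triangle with
comparison cosine `C` at the vertex. -/
theorem two_mul_mul_le_of_first_variation {Δ C Cs κ ε : ℝ} (d : ℝ → ℝ) (hΔ : 0 < Δ)
    (hC0 : 0 ≤ C) (hC1 : C ≤ 1) (hκ : 0 < κ) (hε : 0 < ε)
    (hup : ∀ σ ∈ Ioo 0 ε,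
      cosh (d σ) ≤ cosh σ * cosh (κ * σ) - sinh σ * sinh (κ * σ) * Cs)
    (hlow : ∀ σ ∈ Ioo 0 ε,
      sinh Δ * C * sinh (κ * σ) - cosh Δ * (cosh (κ * σ) - 1) ≤ sinh Δ * d σ) :
    2 * κ * Cs ≤ 1 + κ ^ 2 * (1 - C ^ 2) := by
  rcases le_or_gt Cs 0 with hCs | hCs
  · nlinarith [mul_nonneg (sq_nonneg κ) (sub_nonneg.2 (pow_le_one₀ (n := 2) hC0 hC1))]
  have hcont : ContinuousAt (firstVariationBound Δ C κ) 0 := by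
    unfold firstVariationBound; fun_prop
  have hlim : Cs * κ ≤ firstVariationBound Δ C κ 0 :=
    ge_of_tendsto (hcont.tendsto.mono_left nhdsWithin_le_nhds)
      (Filter.mem_of_superset (Ioo_mem_nhdsGT hε) fun σ hσ =>
        mul_le_firstVariationBound hΔ hC0 hCs hκ hσ.1 (hup σ hσ) (hlow σ hσ))
  simp [firstVariationBound] at hlim
  rw [max_eq_left (mul_nonneg hκ.le hC0)] at hlim
  nlinarith

theorem cmpCos_le_one {a b c : ℝ} (ha : 0 ≤ a) (hb : 0 ≤ b) (hc : |a - b| ≤ c) :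
    cmpCos a b c ≤ 1 := by
  rcases (mul_nonneg (sinh_nonneg_iff.2 ha) (sinh_nonneg_iff.2 hb)).eq_or_lt with h | h
  · simp [cmpCos, ← h]
  · rw [cmpCos, div_le_one h]
    have := cosh_le_cosh.2 (hc.trans_eq (abs_of_nonneg ((abs_nonneg _).trans hc)).symm)
    rw [cosh_sub] at this
    linarith

theorem one_le_cosh_mul_cosh_sub_sinh_mul_sinh_mul {s t C : ℝ} (hs : 0 ≤ s) (ht : 0 ≤ t)
    (hC : C ≤ 1) : 1 ≤ cosh s * cosh t - sinh s * sinh t * C := by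
  have := mul_le_of_le_one_right (mul_nonneg (sinh_nonneg_iff.2 hs) (sinh_nonneg_iff.2 ht)) hC
  nlinarith [one_le_cosh (s - t), cosh_sub s t]

theorem sinh_sq_mul_one_sub_cmpCos_le {a b c t : ℝ} (ha : 0 < a) (hb : 0 < b) (hc : |a - b| ≤ c)
    (ht : 0 ≤ t) (hta : t ≤ a) (htb : t ≤ b) :
    sinh t ^ 2 * (1 - cmpCos a b c) ≤ exp (2 * t - a - b + c) / 2 := by
  have hsa := sinh_pos_iff.2 ha
  have hsb := sinh_pos_iff.2 hb
  have hid : sinh a * sinh b * (1 - cmpCos a b c) = cosh c - cosh (a - b) := by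
    rw [cmpCos, cosh_sub]; field_simp; ring
  have hcc : 0 ≤ cosh c - cosh (a - b) := sub_nonneg.2 (cosh_le_cosh.2 (hc.trans (le_abs_self c)))
  have hce : cosh c - cosh (a - b) ≤ exp c / 2 := by
    rw [cosh_eq]
    linarith [one_le_cosh (a - b), exp_le_one_iff.2 (neg_nonpos.2 ((abs_nonneg _).trans hc))]
  have hst := mul_le_mul (sinh_le_sinh_mul_exp_sub hta) (sinh_le_sinh_mul_exp_sub htb)
    (sinh_nonneg_iff.2 ht) (by positivity)
  have hexp : exp (t - a) * exp (t - b) * exp c = exp (2 * t - a - b + c) := by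
    rw [← exp_add, ← exp_add]; ring_nf
  refine le_of_mul_le_mul_left ?_ (mul_pos hsa hsb)
  calc sinh a * sinh b * (sinh t ^ 2 * (1 - cmpCos a b c))
      = sinh t ^ 2 * (cosh c - cosh (a - b)) := by rw [← hid]; ring
    _ ≤ (sinh a * exp (t - a)) * (sinh b * exp (t - b)) * (exp c / 2) := by
        rw [sq]; exact mul_le_mul hst hce hcc (by positivity)
    _ = sinh a * sinh b * (exp (2 * t - a - b + c) / 2) := by rw [← hexp]; ring

theorem sinh_mul_le_sinh_of_sq_add_cmpCos_sq_le_one {b Δ c Cs : ℝ} (hb : 0 < b) (hΔ : 0 < Δ)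
    (hc : 0 ≤ c) (h : Cs ^ 2 + cmpCos b Δ c ^ 2 ≤ 1) : sinh b * Cs ≤ sinh c := by
  have hsb := sinh_pos_iff.2 hb
  have hsΔ := sinh_pos_iff.2 hΔ
  have hC : sinh b * sinh Δ * cmpCos b Δ c = cosh b * cosh Δ - cosh c := by
    rw [cmpCos]; field_simp
  have hid : sinh b ^ 2 * sinh Δ ^ 2 - (cosh b * cosh Δ - cosh c) ^ 2
      = sinh Δ ^ 2 * sinh c ^ 2 - (cosh b - cosh Δ * cosh c) ^ 2 := by
    rw [sinh_sq b, sinh_sq Δ, sinh_sq c]; ring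
  have h1 : (sinh b * Cs) ^ 2 * sinh Δ ^ 2 ≤ sinh c ^ 2 * sinh Δ ^ 2 := by
    have := mul_le_mul_of_nonneg_left h (by positivity : 0 ≤ sinh b ^ 2 * sinh Δ ^ 2)
    have hsq : (sinh b * sinh Δ * cmpCos b Δ c) ^ 2 = (cosh b * cosh Δ - cosh c) ^ 2 := by
      rw [hC]
    nlinarith [sq_nonneg (cosh b - cosh Δ * cosh c)]
  have h2 := sq_le_sq.1 (le_of_mul_le_mul_right h1 (by positivity))
  rw [abs_of_nonneg (sinh_nonneg_iff.2 hc)] at h2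
  exact (le_abs_self _).trans h2

section

variable {X : Type*} [MetricSpace X]

def gromovProduct (o u v : X) : ℝ :=
  (dist o u + dist o v - dist u v) / 2

theorem gromovProduct_comm (o u v : X) : gromovProduct o u v = gromovProduct o v u := by
  simp only [gromovProduct, dist_comm u v, add_comm (dist o u)]

theorem gromovProduct_nonneg (o u v : X) : 0 ≤ gromovProduct o u v := by
  unfold gromovProduct; linarith [dist_triangle_left u v o]

theorem gromovProduct_le_dist_left (o u v : X) : gromovProduct o u v ≤ dist o u := by
  unfold gromovProduct; linarith [dist_triangle o u v]

theorem gromovProduct_le_dist_right (o u v : X) : gromovProduct o u v ≤ dist o v := by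
  rw [gromovProduct_comm]; exact gromovProduct_le_dist_left o v u

theorem gromovProduct_add_gromovProduct (o u v : X) :
    gromovProduct o u v + gromovProduct u o v = dist o u := by
  simp only [gromovProduct, dist_comm u o, dist_comm u v]; ring

theorem abs_dist_sub_gromovProduct_le {x y z m : X} {c : ℝ}
    (hm : dist y m + dist m z = dist y z) (hxm : dist x m ≤ gromovProduct x y z + c) :
    |dist m y - gromovProduct y x z| ≤ c := by
  unfold gromovProduct at *
  rw [abs_le]
  constructor <;> linarith [dist_triangle x m z, dist_triangle x m y, dist_comm x y, dist_comm m y]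

theorem cmpCos_dist_le_one (x y z : X) : cmpCos (dist x y) (dist x z) (dist y z) ≤ 1 :=
  cmpCos_le_one dist_nonneg dist_nonneg (by simpa [dist_comm] using abs_dist_sub_le y z x)

/-- Unlike `cmpCos` itself, this identity also holds for degenerate triangles. -/
theorem sinh_mul_sinh_mul_cmpCos_dist (x y z : X) :
    sinh (dist x y) * sinh (dist x z) * cmpCos (dist x y) (dist x z) (dist y z)
      = cosh (dist x y) * cosh (dist x z) - cosh (dist y z) := by
  by_cases h : sinh (dist x y) * sinh (dist x z) = 0
  · rcases mul_eq_zero.1 h with h | h <;>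
      obtain rfl := dist_eq_zero.1 (sinh_eq_zero.1 h) <;> simp [dist_comm]
  · rw [cmpCos, mul_div_assoc', mul_div_cancel_left₀ _ h]

end

namespace GeodesicStructure

variable {X : Type*} [MetricSpace X] (G : GeodesicStructure X)

theorem dist_geo_left (x y : X) {t : ℝ} (ht : t ∈ Icc 0 (dist x y)) :
    dist (G.geo x y t) x = t := by
  simpa [G.geo_zero, abs_of_nonneg ht.1] using G.geo_isom x y t ht 0 ⟨le_rfl, dist_nonneg⟩

theorem dist_geo_right (x y : X) {t : ℝ} (ht : t ∈ Icc 0 (dist x y)) :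
    dist (G.geo x y t) y = dist x y - t := by
  simpa [G.geo_end, abs_of_nonpos (sub_nonpos.2 ht.2)] using
    G.geo_isom x y t ht (dist x y) ⟨dist_nonneg, le_rfl⟩

theorem geo_mem_seg (x y : X) {t : ℝ} (ht : t ∈ Icc 0 (dist x y)) : G.geo x y t ∈ G.seg x y :=
  ⟨t, ht, rfl⟩

theorem seg_nonempty (x y : X) : (G.seg x y).Nonempty :=
  ⟨_, G.geo_mem_seg x y ⟨le_rfl, dist_nonneg⟩⟩

theorem dist_add_dist_of_mem_seg {x y m : X} (hm : m ∈ G.seg x y) :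
    dist x m + dist m y = dist x y := by
  obtain ⟨t, ht, rfl⟩ := hm
  rw [dist_comm x, G.dist_geo_left x y ht, G.dist_geo_right x y ht]
  ring

theorem isCompact_seg (x y : X) : IsCompact (G.seg x y) :=
  isCompact_Icc.image_of_continuousOn (LipschitzOnWith.of_dist_le_mul (K := 1)
    fun s hs t ht => by simp [G.geo_isom x y s hs t ht, Real.dist_eq]).continuousOn

theorem exists_isNearestPt (x y z : X) : ∃ m, IsNearestPt (G.seg y z) x m := by
  obtain ⟨m, hm, hmin⟩ := (G.isCompact_seg y z).exists_isMinOn (G.seg_nonempty y z)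
    (continuous_const.dist continuous_id).continuousOn
  exact ⟨m, hm, fun q hq => hmin hq⟩

theorem gromovProduct_le_infDist (y x w : X) :
    gromovProduct y x w ≤ infDist y (G.seg x w) :=
  (le_infDist (G.seg_nonempty x w)).2 fun m hm => by
    unfold gromovProduct
    linarith [G.dist_add_dist_of_mem_seg hm, dist_triangle y m x, dist_triangle y m w,
      dist_comm m x]

end GeodesicStructure

theorem IsNearestPt.geo {X : Type*} [MetricSpace X] (G : GeodesicStructure X) {S : Set X}
    {x p : X} (hp : IsNearestPt S x p) {σ : ℝ} (hσ : σ ∈ Icc 0 (dist p x)) :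
    IsNearestPt S (G.geo p x σ) p :=
  ⟨hp.1, fun u hu => by
    rw [G.dist_geo_left p x hσ]
    linarith [hp.2 u hu, dist_triangle x (G.geo p x σ) u, G.dist_geo_right p x hσ,
      dist_comm x (G.geo p x σ), dist_comm x p]⟩

namespace GeodesicStructure.IsCATNegOne

variable {X : Type*} [MetricSpace X] {G : GeodesicStructure X}

-- `cmpDist` is `_root_.arcosh` of the right-hand side, which is `Real.arcosh` by definition.
theorem cosh_dist_geo_geo_le (hX : G.IsCATNegOne) {x y z : X} {s t : ℝ}
    (hs : s ∈ Icc 0 (dist x y)) (ht : t ∈ Icc 0 (dist x z)) :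
    cosh (dist (G.geo x y s) (G.geo x z t))
      ≤ cosh s * cosh t - sinh s * sinh t * cmpCos (dist x y) (dist x z) (dist y z) :=
  cosh_le_of_le_arcosh dist_nonneg
    (one_le_cosh_mul_cosh_sub_sinh_mul_sinh_mul hs.1 ht.1 (cmpCos_dist_le_one x y z))
    (hX x y z s hs t ht)

theorem cosh_dist_geo_mul_sinh_le (hX : G.IsCATNegOne) (x y z : X) {t : ℝ}
    (ht : t ∈ Icc 0 (dist y z)) :
    cosh (dist x (G.geo y z t)) * sinh (dist y z)
      ≤ cosh (dist y x) * sinh (dist y z - t) + cosh (dist x z) * sinh t := by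
  have key := hX.cosh_dist_geo_geo_le (x := y) (y := x) (z := z) ⟨dist_nonneg, le_rfl⟩ ht
  rw [G.geo_end] at key
  have hid := congrArg (· * sinh t) (sinh_mul_sinh_mul_cmpCos_dist y x z)
  rw [sinh_sub]
  linarith [mul_le_mul_of_nonneg_right key (sinh_nonneg_iff.2 (dist_nonneg : 0 ≤ dist y z))]

theorem geo_dist_eq_of_dist_add_dist_eq (hX : G.IsCATNegOne) {p r m : X}
    (h : dist p m + dist m r = dist p r) :
    G.geo p r (dist p m) = m := by
  have ht : dist p m ∈ Icc 0 (dist p r) :=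
    ⟨dist_nonneg, by linarith [dist_nonneg (x := m) (y := r)]⟩
  rcases ht.1.eq_or_lt with h0 | h0
  · rw [← h0, G.geo_zero]; exact dist_eq_zero.1 h0.symm
  have hL : 0 < sinh (dist p r) := sinh_pos_iff.2 (h0.trans_le ht.2)
  have hs := hX.cosh_dist_geo_mul_sinh_le m p r ht
  rw [show dist m r = dist p r - dist p m by linarith] at hs
  have hsum := sinh_add (dist p r - dist p m) (dist p m)
  rw [sub_add_cancel] at hsum
  have hc : cosh (dist m (G.geo p r (dist p m))) ≤ cosh 0 := by
    rw [cosh_zero]; exact le_of_mul_le_mul_right (by linarith) hL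
  exact (dist_le_zero.1 ((cosh_strictMonoOn.le_iff_le dist_nonneg (le_refl (0 : ℝ))).1 hc)).symm

theorem seg_subset_seg (hX : G.IsCATNegOne) {y z p r : X} (hp : p ∈ G.seg y z)
    (hr : r ∈ G.seg y z) : G.seg p r ⊆ G.seg y z := by
  obtain ⟨s, hs, rfl⟩ := hp
  obtain ⟨τ, hτ, rfl⟩ := hr
  rintro _ ⟨u, hu, rfl⟩
  rw [G.geo_isom y z s hs τ hτ] at hu
  obtain ⟨v, hv, hsv, hvτ⟩ :
      ∃ v ∈ Icc 0 (dist y z), |s - v| = u ∧ |v - τ| = |s - τ| - u := by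
    rcases le_total s τ with h | h
    · rw [abs_of_nonpos (sub_nonpos.2 h)] at hu ⊢
      refine ⟨s + u, ⟨by linarith [hs.1, hu.1], by linarith [hτ.2, hu.2]⟩, ?_, ?_⟩
      · rw [show s - (s + u) = -u by ring, abs_neg, abs_of_nonneg hu.1]
      · rw [abs_of_nonpos (by linarith [hu.2])]; ring
    · rw [abs_of_nonneg (sub_nonneg.2 h)] at hu ⊢
      refine ⟨s - u, ⟨by linarith [hτ.1, hu.2], by linarith [hs.2, hu.1]⟩, ?_, ?_⟩
      · rw [sub_sub_cancel, abs_of_nonneg hu.1]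
      · rw [abs_of_nonneg (by linarith [hu.2])]; ring
  have hm := hX.geo_dist_eq_of_dist_add_dist_eq (p := G.geo y z s) (r := G.geo y z τ)
    (m := G.geo y z v) (by
      rw [G.geo_isom y z s hs v hv, G.geo_isom y z v hv τ hτ, G.geo_isom y z s hs τ hτ]
      rw [hsv, hvτ]; ring)
  rw [G.geo_isom y z s hs v hv, hsv] at hm
  rw [hm]
  exact G.geo_mem_seg y z hv

theorem cosh_dist_mul_cosh_dist_le (hX : G.IsCATNegOne) {S : Set X} {x p r : X}
    (hp : IsNearestPt S x p) (hpr : G.seg p r ⊆ S) :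
    cosh (dist x p) * cosh (dist p r) ≤ cosh (dist x r) := by
  rcases (dist_nonneg : 0 ≤ dist p r).eq_or_lt with hL | hL
  · rw [← hL, cosh_zero, mul_one, dist_eq_zero.1 hL.symm]
  -- Stewart's inequality at `γ t` together with `d(x, γ t) ≥ d(x, p)`; then let `t → 0`.
  have hstep : ∀ t ∈ Ioo 0 (dist p r), cosh (dist x p) * cosh (dist p r)
      ≤ cosh (dist x r) + cosh (dist x p) * sinh (dist p r) * sinh t := by
    intro t ht
    have htI : t ∈ Icc 0 (dist p r) := Ioo_subset_Icc_self ht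
    have hs := hX.cosh_dist_geo_mul_sinh_le x p r htI
    rw [sinh_sub, dist_comm p x] at hs
    have hmin : cosh (dist x p) ≤ cosh (dist x (G.geo p r t)) :=
      (cosh_strictMonoOn.le_iff_le dist_nonneg dist_nonneg).2
        (hp.2 _ (hpr (G.geo_mem_seg p r htI)))
    have hst : 0 < sinh t := sinh_pos_iff.2 ht.1
    have hcosh : cosh t - 1 ≤ sinh t * sinh t := by nlinarith [cosh_sq t, one_le_cosh t]
    refine le_of_mul_le_mul_right ?_ hst
    nlinarith [mul_le_mul_of_nonneg_right hmin (sinh_pos_iff.2 hL).le,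
      mul_le_mul_of_nonneg_left hcosh (mul_pos (cosh_pos (dist x p)) (sinh_pos_iff.2 hL)).le]
  have hcont : ContinuousAt
      (fun t => cosh (dist x r) + cosh (dist x p) * sinh (dist p r) * sinh t) 0 := by fun_prop
  simpa using ge_of_tendsto (hcont.tendsto.mono_left nhdsWithin_le_nhds)
    (Filter.mem_of_superset (Ioo_mem_nhdsGT hL) hstep)

theorem cosh_dist_geo_gromovProduct_le (hX : G.IsCATNegOne) (x y z : X) :
    cosh (dist x (G.geo y z (gromovProduct y x z))) ≤ exp (gromovProduct x y z) := by
  rcases (dist_nonneg : 0 ≤ dist y z).eq_or_lt with h0 | h0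
  · obtain rfl := dist_eq_zero.1 h0.symm
    have hg : gromovProduct y x y = 0 := by simp [gromovProduct, dist_comm]
    have hg' : gromovProduct x y y = dist x y := by simp [gromovProduct]
    rw [hg, hg', G.geo_zero, cosh_eq]
    linarith [exp_le_exp.2 (neg_le_self (dist_nonneg : 0 ≤ dist x y))]
  have hg : gromovProduct y x z ∈ Icc 0 (dist y z) :=
    ⟨gromovProduct_nonneg y x z, gromovProduct_le_dist_right y x z⟩
  have hs := hX.cosh_dist_geo_mul_sinh_le x y z hg
  have hb : dist y x = gromovProduct x y z + gromovProduct y x z := by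
    unfold gromovProduct; rw [dist_comm x y]; ring
  have hc : dist x z = gromovProduct x y z + (dist y z - gromovProduct y x z) := by
    unfold gromovProduct; rw [dist_comm x y]; ring
  have h := cosh_add_mul_sinh_add_cosh_add_mul_sinh_le (gromovProduct_nonneg x y z) hg.1
    (sub_nonneg.2 hg.2)
  rw [add_sub_cancel, ← hb, ← hc] at h
  exact le_of_mul_le_mul_right (hs.trans h) (sinh_pos_iff.2 h0)

theorem dist_geo_gromovProduct_le (hX : G.IsCATNegOne) (x y z : X) :
    dist x (G.geo y z (gromovProduct y x z)) ≤ gromovProduct x y z + log 2 :=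
  (cosh_strictMonoOn.le_iff_le dist_nonneg
    (add_nonneg (gromovProduct_nonneg x y z) (log_nonneg one_le_two))).1
    ((hX.cosh_dist_geo_gromovProduct_le x y z).trans (exp_le_cosh_add_log_two _))

theorem dist_geo_geo_le_exp (hX : G.IsCATNegOne) (y x z : X) {t : ℝ} (ht0 : 0 ≤ t)
    (ht : t ≤ gromovProduct y x z) :
    dist (G.geo y x t) (G.geo y z t) ≤ exp (t - gromovProduct y x z) := by
  rcases ht0.eq_or_lt with rfl | htpos
  · rw [G.geo_zero, G.geo_zero, dist_self]; exact (exp_pos _).le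
  have htb := ht.trans (gromovProduct_le_dist_left y x z)
  have hta := ht.trans (gromovProduct_le_dist_right y x z)
  have key := hX.cosh_dist_geo_geo_le (x := y) (y := x) (z := z) ⟨ht0, htb⟩ ⟨ht0, hta⟩
  have hthin := sinh_sq_mul_one_sub_cmpCos_le (htpos.trans_le htb) (htpos.trans_le hta)
    (by simpa [dist_comm] using abs_dist_sub_le x z y) ht0 htb hta
  have hexp : exp (2 * t - dist y x - dist y z + dist x z) = exp (t - gromovProduct y x z) ^ 2 := by
    rw [← exp_nat_mul]; unfold gromovProduct; push_cast; ring_nf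
  have hcosh := one_add_sq_div_two_le_cosh (exp (t - gromovProduct y x z))
  refine (cosh_strictMonoOn.le_iff_le dist_nonneg (exp_pos _).le).1 ?_
  nlinarith [cosh_sq t]

/-- Gromov's four-point condition with `δ = 1`. -/
theorem min_gromovProduct_le (hX : G.IsCATNegOne) (y x z w : X) :
    min (gromovProduct y x z) (gromovProduct y z w) ≤ gromovProduct y x w + 1 := by
  set t := min (gromovProduct y x z) (gromovProduct y z w)
  have ht0 : 0 ≤ t := le_min (gromovProduct_nonneg y x z) (gromovProduct_nonneg y z w)
  have hl : t ≤ gromovProduct y x z := min_le_left _ _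
  have hr : t ≤ gromovProduct y z w := min_le_right _ _
  have e1 := exp_le_one_iff.2 (sub_nonpos.2 hl)
  have e2 := exp_le_one_iff.2 (sub_nonpos.2 hr)
  have d1 := G.dist_geo_right y x ⟨ht0, hl.trans (gromovProduct_le_dist_left y x z)⟩
  have d2 := G.dist_geo_right y w ⟨ht0, hr.trans (gromovProduct_le_dist_right y z w)⟩
  have h1 := hX.dist_geo_geo_le_exp y x z ht0 hl
  have h2 := hX.dist_geo_geo_le_exp y z w ht0 hr
  have hxw : gromovProduct y x w = (dist y x + dist y w - dist x w) / 2 := rfl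
  linarith [dist_triangle4 x (G.geo y x t) (G.geo y z t) (G.geo y w t),
    dist_triangle x (G.geo y w t) w, dist_comm x (G.geo y x t)]

theorem dist_le_of_isNearestPt (hX : G.IsCATNegOne) {x y z m : X}
    (hm : IsNearestPt (G.seg y z) x m) : dist x m ≤ gromovProduct x y z + log 2 :=
  (hm.2 _ (G.geo_mem_seg y z
    ⟨gromovProduct_nonneg y x z, gromovProduct_le_dist_right y x z⟩)).trans
    (hX.dist_geo_gromovProduct_le x y z)

theorem abs_dist_sub_gromovProduct_le (hX : G.IsCATNegOne) {x y z m : X}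
    (hm : IsNearestPt (G.seg y z) x m) :
    |dist m y - gromovProduct y x z| ≤ log 2 ∧ |dist m z - gromovProduct z x y| ≤ log 2 := by
  have hym := G.dist_add_dist_of_mem_seg hm.1
  refine ⟨_root_.abs_dist_sub_gromovProduct_le hym (hX.dist_le_of_isNearestPt hm),
    _root_.abs_dist_sub_gromovProduct_le ?_ ?_⟩
  · rw [dist_comm z m, dist_comm m y, dist_comm z y]; linarith
  · rw [gromovProduct_comm]; exact hX.dist_le_of_isNearestPt hm

theorem infDist_le_gromovProduct_add (hX : G.IsCATNegOne) (y x w : X) :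
    infDist y (G.seg x w) ≤ gromovProduct y x w + log 2 :=
  (infDist_le_dist_of_mem (G.geo_mem_seg x w
    ⟨gromovProduct_nonneg x y w, gromovProduct_le_dist_right x y w⟩)).trans
    (hX.dist_geo_gromovProduct_le y x w)

-- Points of `[p,x]` stay at distance at least `d(p,q)` from `q`, whereas by comparison in the
-- triangle `(p; w, q)` the points of `[p,w]` approach `q` at the first-order rate given by the
-- comparison cosine at `p`.
theorem sinh_mul_cmpCos_mul_sinh_sub_le (hX : G.IsCATNegOne) {S : Set X} {x w p q : X}
    (hp : IsNearestPt S x p) (hpq : G.seg p q ⊆ S) (hΔ : 0 < dist p q) {σ s : ℝ}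
    (hσ : σ ∈ Icc 0 (dist p x)) (hs : s ∈ Icc 0 (dist p w)) :
    sinh (dist p q) * cmpCos (dist p w) (dist p q) (dist w q) * sinh s
        - cosh (dist p q) * (cosh s - 1)
      ≤ sinh (dist p q) * dist (G.geo p x σ) (G.geo p w s) := by
  have hχ : dist p q ≤ dist (G.geo p x σ) q := by
    have := hX.cosh_dist_mul_cosh_dist_le (hp.geo G hσ) hpq
    rw [G.dist_geo_left p x hσ] at this
    exact (cosh_strictMonoOn.le_iff_le hΔ.le dist_nonneg).1
      (by nlinarith [one_le_cosh σ, cosh_pos (dist p q)])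
  have hω := hX.cosh_dist_geo_geo_le (x := p) (y := w) (z := q) hs ⟨dist_nonneg, le_rfl⟩
  rw [G.geo_end] at hω
  have htan := cosh_add_mul_sinh_le_cosh_add (dist p q) (dist (G.geo p w s) q - dist p q)
  rw [add_sub_cancel] at htan
  have := mul_le_mul_of_nonneg_left (show dist p q - dist (G.geo p w s) q
      ≤ dist (G.geo p x σ) (G.geo p w s) by
    linarith [dist_triangle (G.geo p x σ) (G.geo p w s) q]) (sinh_pos_iff.2 hΔ).le
  nlinarith

/-- For the foot `p` of `x` on a convex set containing `[p,q]`, the comparison angles at `p`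
between `x, w` and between `w, q` add up to at least `π/2`. -/
theorem cmpCos_sq_add_cmpCos_sq_le_one (hX : G.IsCATNegOne) {S : Set X} {x w p q : X}
    (hp : IsNearestPt S x p) (hpq : G.seg p q ⊆ S)
    (ha : 0 < dist p x) (hb : 0 < dist p w) (hΔ : 0 < dist p q)
    (hC : 0 ≤ cmpCos (dist p w) (dist p q) (dist w q))
    (hCs : 0 < cmpCos (dist p x) (dist p w) (dist x w)) :
    cmpCos (dist p x) (dist p w) (dist x w) ^ 2 + cmpCos (dist p w) (dist p q) (dist w q) ^ 2
      ≤ 1 := by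
  set Cs := cmpCos (dist p x) (dist p w) (dist x w)
  set C := cmpCos (dist p w) (dist p q) (dist w q)
  -- `κ = 1 / Cs` optimizes the bound of `two_mul_mul_le_of_first_variation`.
  set κ := Cs⁻¹
  have hκ : 0 < κ := inv_pos.2 hCs
  have hmem : ∀ σ ∈ Ioo 0 (min (dist p x) (dist p w / κ)),
      σ ∈ Icc 0 (dist p x) ∧ κ * σ ∈ Icc 0 (dist p w) := by
    intro σ hσ
    have h2 := hσ.2.trans_le (min_le_right _ _)
    rw [lt_div_iff₀ hκ] at h2
    exact ⟨⟨hσ.1.le, hσ.2.le.trans (min_le_left _ _)⟩,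
      ⟨mul_nonneg hκ.le hσ.1.le, by linarith⟩⟩
  have key := two_mul_mul_le_of_first_variation (Cs := Cs)
    (fun σ => dist (G.geo p x σ) (G.geo p w (κ * σ))) hΔ hC (cmpCos_dist_le_one p w q) hκ
    (lt_min ha (div_pos hb hκ))
    (fun σ hσ => hX.cosh_dist_geo_geo_le (hmem σ hσ).1 (hmem σ hσ).2) ?_
  · have hκCs : κ * Cs = 1 := inv_mul_cancel₀ hCs.ne'
    have h1 : Cs ^ 2 ≤ Cs ^ 2 * (κ ^ 2 * (1 - C ^ 2)) := by nlinarith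
    have h2 : Cs ^ 2 * (κ ^ 2 * (1 - C ^ 2)) = 1 - C ^ 2 := by
      rw [show Cs ^ 2 * (κ ^ 2 * (1 - C ^ 2)) = (κ * Cs) ^ 2 * (1 - C ^ 2) by ring, hκCs]; ring
    linarith
  exact fun σ hσ => hX.sinh_mul_cmpCos_mul_sinh_sub_le hp hpq hΔ (hmem σ hσ).1 (hmem σ hσ).2

theorem cosh_mul_cosh_mul_cosh_sub_sinh_mul_sinh_le (hX : G.IsCATNegOne) {S : Set X}
    {x w p q : X} (hp : IsNearestPt S x p) (hq : IsNearestPt S w q) (hpq : G.seg p q ⊆ S)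
    (hqp : G.seg q p ⊆ S) :
    cosh (dist x p) * cosh (dist w q) * cosh (dist p q) - sinh (dist x p) * sinh (dist w q)
      ≤ cosh (dist x w) := by
  set Cs := cmpCos (dist p x) (dist p w) (dist x w)
  have hF := hX.cosh_dist_mul_cosh_dist_le hq hqp
  rw [dist_comm q p, dist_comm w p] at hF
  have hid := sinh_mul_sinh_mul_cmpCos_dist p x w
  have hkey : sinh (dist p x) * (sinh (dist p w) * Cs) ≤ sinh (dist p x) * sinh (dist w q) := by
    rcases (dist_nonneg : 0 ≤ dist p x).eq_or_lt with ha | ha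
    · simp [← ha]
    refine mul_le_mul_of_nonneg_left ?_ (sinh_pos_iff.2 ha).le
    rcases (dist_nonneg : 0 ≤ dist p w).eq_or_lt with hb | hb
    · simp [← hb]
    rcases (dist_nonneg : 0 ≤ dist p q).eq_or_lt with hΔ | hΔ
    · rw [← dist_eq_zero.1 hΔ.symm, dist_comm w p]
      exact mul_le_of_le_one_right (sinh_pos_iff.2 hb).le (cmpCos_dist_le_one p x w)
    rcases le_or_gt Cs 0 with hCs | hCs
    · nlinarith [sinh_pos_iff.2 hb, sinh_nonneg_iff.2 (dist_nonneg : 0 ≤ dist w q)]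
    have hC : 0 ≤ cmpCos (dist p w) (dist p q) (dist w q) := by
      refine div_nonneg ?_ (mul_pos (sinh_pos_iff.2 hb) (sinh_pos_iff.2 hΔ)).le
      nlinarith [one_le_cosh (dist p q), one_le_cosh (dist w q), one_le_cosh (dist p w)]
    exact sinh_mul_le_sinh_of_sq_add_cmpCos_sq_le_one hb hΔ dist_nonneg
      (hX.cmpCos_sq_add_cmpCos_sq_le_one hp hpq ha hb hΔ hC hCs)
  rw [dist_comm x p]
  nlinarith [mul_le_mul_of_nonneg_left hF (cosh_pos (dist p x)).le]

theorem alignedTriple_of_infDist_lt (hX : G.IsCATNegOne) {R : ℝ} (hR : 1 < R) {x y z w : X}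
    (hy : infDist y (G.seg x w) < R) (hz : infDist z (G.seg y w) < R) :
    AlignedTriple G x y z w (6 * R) := by
  have hyxw := (G.gromovProduct_le_infDist y x w).trans_lt hy
  have hzyw := (G.gromovProduct_le_infDist z y w).trans_lt hz
  have hlog : log 2 < 1 := by linarith [log_two_lt_d9]
  obtain ⟨p, hp⟩ := G.exists_isNearestPt x y z
  obtain ⟨q, hq⟩ := G.exists_isNearestPt w y z
  refine ⟨⟨p, hp, ?_⟩, ⟨q, hq, ?_⟩⟩
  · have hpy := (abs_le.1 (hX.abs_dist_sub_gromovProduct_le hp).1).2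
    have hyz := G.dist_add_dist_of_mem_seg hp.1
    rcases min_le_iff.1 (hX.min_gromovProduct_le y x z w) with h | h
    · linarith
    · linarith [gromovProduct_add_gromovProduct y z w, dist_comm p y,
        dist_nonneg (x := p) (y := z)]
  · have hqz := (abs_le.1 (hX.abs_dist_sub_gromovProduct_le hq).2).2
    rw [gromovProduct_comm] at hqz
    linarith

theorem infDist_lt_of_alignedTriple (hX : G.IsCATNegOne) {R : ℝ} (hR : 1 < R) {x y z w : X}
    (h : AlignedTriple G x y z w R) (hyz : 3 * R < dist y z) :
    infDist y (G.seg x w) < 3 * R ∧ infDist z (G.seg y w) < 3 * R := by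
  obtain ⟨⟨p, hp, hpy⟩, ⟨q, hq, hqz⟩⟩ := h
  have hlog : log 2 < 1 := by linarith [log_two_lt_d9]
  constructor
  · have hΔ : R ≤ dist p q := by linarith [dist_triangle4 y p q z, dist_comm p y]
    have hgap := add_add_sub_lt_of_cosh_le hR hΔ dist_nonneg
      (hX.cosh_mul_cosh_mul_cosh_sub_sinh_mul_sinh_le hp hq (hX.seg_subset_seg hp.1 hq.1)
        (hX.seg_subset_seg hq.1 hp.1))
    have hgp : gromovProduct y x w = (dist y x + dist y w - dist x w) / 2 := rfl
    linarith [hX.infDist_le_gromovProduct_add y x w, dist_triangle y p x, dist_triangle4 y p q w,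
      dist_comm p y, dist_comm p x, dist_comm q w]
  · have hqz' := (abs_le.1 (hX.abs_dist_sub_gromovProduct_le hq).2).1
    have := hX.infDist_le_gromovProduct_add z y w
    rw [gromovProduct_comm z y w] at this
    linarith

end GeodesicStructure.IsCATNegOne

theorem shadows_and_alignment_general
    {X : Type*} [MetricSpace X]
    (G : GeodesicStructure X) (hX : G.IsCATNegOne) :
    (∀ R : ℝ, 1 < R → ∀ x y z w : X,
        Metric.infDist y (G.seg x w) < R → Metric.infDist z (G.seg y w) < R →
        AlignedTriple G x y z w (6 * R)) ∧
    (∀ R : ℝ, 1 < R → ∀ x y z w : X,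
        AlignedTriple G x y z w R → 3 * R < dist y z →
        Metric.infDist y (G.seg x w) < 3 * R ∧ Metric.infDist z (G.seg y w) < 3 * R) :=
  ⟨fun _ hR _ _ _ _ hy hz => hX.alignedTriple_of_infDist_lt hR hy hz,
    fun _ hR _ _ _ _ h hyz => hX.infDist_lt_of_alignedTriple hR h hyz⟩

/-- **Shadows and alignment** (Lemma 2.8).  Let `X` be a proper geodesic CAT(−1) space,
with shadows `O_R(x,y) = {w : d([x,w], y) < R}`.
(1) For every `R > 1` and `x, y, z, w ∈ X`, if `w ∈ O_R(x,y) ∩ O_R(y,z)` then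
`(x, [y,z], w)` is `6R`-aligned.
(2) For every `R > 1` and `x, y, z, w ∈ X`, if `(x, [y,z], w)` is `R`-aligned and
`d(y,z) > 3R`, then `w ∈ O_{3R}(x,y) ∩ O_{3R}(y,z)`. -/
theorem shadows_and_alignment
    {X : Type*} [MetricSpace X] [ProperSpace X]
    (G : GeodesicStructure X) (hX : G.IsCATNegOne) :
    (∀ R : ℝ, 1 < R → ∀ x y z w : X,
        Metric.infDist y (G.seg x w) < R → Metric.infDist z (G.seg y w) < R →
        AlignedTriple G x y z w (6 * R)) ∧
    (∀ R : ℝ, 1 < R → ∀ x y z w : X,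
        AlignedTriple G x y z w R → 3 * R < dist y z →
        Metric.infDist y (G.seg x w) < 3 * R ∧ Metric.infDist z (G.seg y w) < 3 * R) :=
  shadows_and_alignment_general G hX
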